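/- arXiv:2603.27210 — 2 statements merged into one kernel-verified Lean document; each statement's English description precedes it below -/
import Mathlib

section
/- Let Ω' ⊆ ℝ² be open and let λ : ℝ² → ℂ be continuously differentiable on Ω' with Im λ > 0 and λ_x + λ·λ_y = 0 on Ω'. Assume Φ ≠ 0 at every point of Ω' and that the canonical coordinate ξ is injective on Ω'. Then the map Ψ : Ω' → ℂ, Ψ(x,y) := ξ(x,y) = y − λ(x,y)·x, is an open map on Ω', its image ξ(Ω') is open in ℂ, Ψ is a homeomorphism from Ω' onto ξ(Ω'), and the inverse map ξ(Ω') → Ω' is continuously differentiable; that is, Ψ is a C¹ diffeomorphism from Ω' onto ξ(Ω'). -/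
open Complex

noncomputable def pdx (f : ℝ × ℝ → ℂ) (p : ℝ × ℝ) : ℂ := fderiv ℝ f p (1, 0)
noncomputable def pdy (f : ℝ × ℝ → ℂ) (p : ℝ × ℝ) : ℂ := fderiv ℝ f p (0, 1)

/-- The canonical coordinate `ξ(x,y) = y − λ(x,y)·x`. -/
noncomputable def xiC (lam : ℝ × ℝ → ℂ) (p : ℝ × ℝ) : ℂ := (p.2 : ℂ) - lam p * (p.1 : ℂ)

/-- The characteristic Jacobian. -/
noncomputable def Phi (lam : ℝ × ℝ → ℂ) (p : ℝ × ℝ) : ℂ :=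
  (lam p - (starRingEnd ℂ) (lam p))
    - (p.1 : ℂ) * ((starRingEnd ℂ) (pdx lam p) + lam p * (starRingEnd ℂ) (pdy lam p))

/-! Rigidity `λ_x = -λ λ_y` turns the differential of `ξ` into `z ↦ (z₂ - λ z₁) (1 - x λ_y)` and
`Φ` into `(λ - conj λ) · conj (1 - x λ_y)`. Hence `Φ ≠ 0` makes the second factor nonzero, while
`Im λ ≠ 0` makes the first an `ℝ`-isomorphism `ℝ² ≃ ℂ`, so `dξ` is invertible throughout `Ω'`.
The inverse function theorem then makes `ξ` open on `Ω'`, and an injective local diffeomorphism is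
a diffeomorphism onto its image. -/

open Set
open scoped ComplexConjugate

section InverseFunction

variable {𝕂 E F : Type*} [RCLike 𝕂] [NormedAddCommGroup E] [NormedSpace 𝕂 E] [CompleteSpace E]
  [NormedAddCommGroup F] [NormedSpace 𝕂 F] {f : E → F} {s : Set E} {n : WithTop ℕ∞}

theorem ContDiffOn.isOpen_image_of_isInvertible (hf : ContDiffOn 𝕂 n f s) (hs : IsOpen s)
    (hn : n ≠ 0) (hf' : ∀ p ∈ s, (fderiv 𝕂 f p).IsInvertible) {U : Set E} (hU : IsOpen U)
    (hUs : U ⊆ s) : IsOpen (f '' U) := by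
  rw [isOpen_iff_mem_nhds]
  rintro _ ⟨p, hp, rfl⟩
  obtain ⟨e, he⟩ := hf' p (hUs hp)
  have hstrict : HasStrictFDerivAt f (e : E →L[𝕂] F) p :=
    he ▸ (hf.contDiffAt (hs.mem_nhds (hUs hp))).hasStrictFDerivAt hn
  rw [← hstrict.map_nhds_eq_of_equiv]
  exact Filter.image_mem_map (hU.mem_nhds hp)

theorem Set.InjOn.contDiffOn_invFunOn (hinj : InjOn f s) (hf : ContDiffOn 𝕂 n f s)
    (hs : IsOpen s) (hn : n ≠ 0) (hf' : ∀ p ∈ s, (fderiv 𝕂 f p).IsInvertible) :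
    ContDiffOn 𝕂 n (Function.invFunOn f s) (f '' s) := by
  let φ : OpenPartialHomeomorph E F :=
    .ofContinuousOpenRestrict (hinj.toPartialEquiv f s) hf.continuousOn
      (fun V hV => by
        rw [domRestrict_eq, image_comp]
        exact hf.isOpen_image_of_isInvertible hs hn hf' (hs.isOpenMap_subtype_val V hV)
          (Subtype.coe_image_subset s V))
      hs
  rintro _ ⟨p, hp, rfl⟩
  obtain ⟨e, he⟩ := hf' p hp
  have hφp : φ.symm (f p) = p := hinj.leftInvOn_invFunOn hp
  have hfp : ContDiffAt 𝕂 n f p := hf.contDiffAt (hs.mem_nhds hp)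
  refine (φ.contDiffAt_symm (f₀' := e) (mem_image_of_mem f hp) ?_ ?_).contDiffWithinAt
  · rw [hφp, he]
    exact (hfp.differentiableAt hn).hasFDerivAt
  · rwa [hφp]

end InverseFunction

theorem ContinuousLinearMap.isInvertible_of_injective_of_finrank_eq {𝕜 E F : Type*}
    [NontriviallyNormedField 𝕜] [CompleteSpace 𝕜] [NormedAddCommGroup E] [NormedSpace 𝕜 E]
    [FiniteDimensional 𝕜 E] [NormedAddCommGroup F] [NormedSpace 𝕜 F] [FiniteDimensional 𝕜 F]
    (L : E →L[𝕜] F) (hL : Function.Injective L) (hdim : Module.finrank 𝕜 E = Module.finrank 𝕜 F) :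
    L.IsInvertible :=
  ⟨((L : E →ₗ[𝕜] F).linearEquivOfInjective hL hdim).toContinuousLinearEquiv, rfl⟩

section CanonicalCoordinate

variable {lam : ℝ × ℝ → ℂ} {p : ℝ × ℝ}

theorem fderiv_apply_eq_pdx_pdy (f : ℝ × ℝ → ℂ) (p z : ℝ × ℝ) :
    fderiv ℝ f p z = z.1 * pdx f p + z.2 * pdy f p := by
  have hz : z = z.1 • ((1 : ℝ), (0 : ℝ)) + z.2 • ((0 : ℝ), (1 : ℝ)) := by simp
  rw [hz, map_add, map_smul, map_smul]
  simp [pdx, pdy, Complex.real_smul]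

theorem contDiffOn_xiC {n : WithTop ℕ∞} {s : Set (ℝ × ℝ)} (hlam : ContDiffOn ℝ n lam s) :
    ContDiffOn ℝ n (xiC lam) s := by
  have hofReal : ContDiff ℝ n ((↑) : ℝ → ℂ) := ofRealCLM.contDiff
  exact (hofReal.comp contDiff_snd).contDiffOn.sub
    (hlam.mul (hofReal.comp contDiff_fst).contDiffOn)

theorem fderiv_xiC_apply (hd : DifferentiableAt ℝ lam p) (z : ℝ × ℝ) :
    fderiv ℝ (xiC lam) p z = z.2 - (lam p * z.1 + p.1 * fderiv ℝ lam p z) := by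
  have hfst : HasFDerivAt (fun q : ℝ × ℝ => (q.1 : ℂ)) (ofRealCLM.comp (.fst ℝ ℝ ℝ)) p :=
    (ofRealCLM.comp (.fst ℝ ℝ ℝ)).hasFDerivAt
  have hsnd : HasFDerivAt (fun q : ℝ × ℝ => (q.2 : ℂ)) (ofRealCLM.comp (.snd ℝ ℝ ℝ)) p :=
    (ofRealCLM.comp (.snd ℝ ℝ ℝ)).hasFDerivAt
  have hξ : HasFDerivAt (xiC lam) _ p := hsnd.sub (hd.hasFDerivAt.mul hfst)
  rw [hξ.fderiv]
  simp

theorem fderiv_xiC_apply_of_rigid (hd : DifferentiableAt ℝ lam p)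
    (hrigid : pdx lam p + lam p * pdy lam p = 0) (z : ℝ × ℝ) :
    fderiv ℝ (xiC lam) p z = (z.2 - lam p * z.1) * (1 - p.1 * pdy lam p) := by
  rw [fderiv_xiC_apply hd, fderiv_apply_eq_pdx_pdy]
  linear_combination (-(z.1 : ℂ) * p.1) * hrigid

theorem Phi_eq_of_rigid (hrigid : pdx lam p + lam p * pdy lam p = 0) :
    Phi lam p = (lam p - conj (lam p)) * conj (1 - p.1 * pdy lam p) := by
  have hconj := congrArg conj hrigid
  simp only [map_add, map_mul, map_zero] at hconj
  simp only [Phi, map_sub, map_one, map_mul, conj_ofReal]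
  linear_combination (-(p.1 : ℂ)) * hconj

theorem eq_zero_of_ofReal_sub_mul_ofReal_eq_zero {w : ℂ} (hw : w.im ≠ 0) {a b : ℝ}
    (h : (b : ℂ) - w * a = 0) : a = 0 ∧ b = 0 := by
  have ha : a = 0 := by
    simpa [hw] using congrArg im h
  subst ha
  simpa using h

theorem isInvertible_fderiv_xiC (hd : DifferentiableAt ℝ lam p) (him : (lam p).im ≠ 0)
    (hrigid : pdx lam p + lam p * pdy lam p = 0) (hΦ : Phi lam p ≠ 0) :
    (fderiv ℝ (xiC lam) p).IsInvertible := by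
  have hB : 1 - p.1 * pdy lam p ≠ 0 := fun hB =>
    hΦ (by rw [Phi_eq_of_rigid hrigid, hB, map_zero, mul_zero])
  refine ContinuousLinearMap.isInvertible_of_injective_of_finrank_eq _ ?_ (by simp)
  rw [injective_iff_map_eq_zero]
  intro z hz
  rw [fderiv_xiC_apply_of_rigid hd hrigid, mul_eq_zero, or_iff_left hB] at hz
  obtain ⟨h1, h2⟩ := eq_zero_of_ofReal_sub_mul_ofReal_eq_zero him hz
  exact Prod.ext h1 h2

end CanonicalCoordinate

/-- Uniformizing coordinates: on an open set where `Φ ≠ 0` and the canonical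
coordinate `ξ` is injective, `ξ` is an open map, a homeomorphism onto its open
image, with a `C¹` inverse. -/
theorem stmt15
    (Ω' : Set (ℝ × ℝ)) (hΩ' : IsOpen Ω')
    (lam : ℝ × ℝ → ℂ)
    (hlam : ContDiffOn ℝ 1 lam Ω')
    (him : ∀ p ∈ Ω', 0 < (lam p).im)
    (hrigid : ∀ p ∈ Ω', pdx lam p + lam p * pdy lam p = 0)
    (hΦ : ∀ p ∈ Ω', Phi lam p ≠ 0)
    (hinj : Set.InjOn (xiC lam) Ω') :
    (∀ U : Set (ℝ × ℝ), IsOpen U → U ⊆ Ω' → IsOpen (xiC lam '' U)) ∧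
    IsOpen (xiC lam '' Ω') ∧
    ContinuousOn (xiC lam) Ω' ∧
    ∃ Ψinv : ℂ → ℝ × ℝ,
      ContDiffOn ℝ 1 Ψinv (xiC lam '' Ω') ∧
      (∀ p ∈ Ω', Ψinv (xiC lam p) = p) ∧
      (∀ w ∈ xiC lam '' Ω', xiC lam (Ψinv w) = w) := by
  have hξ : ContDiffOn ℝ 1 (xiC lam) Ω' := contDiffOn_xiC hlam
  have hξ' : ∀ p ∈ Ω', (fderiv ℝ (xiC lam) p).IsInvertible := fun p hp =>
    isInvertible_fderiv_xiC ((hlam.contDiffAt (hΩ'.mem_nhds hp)).differentiableAt one_ne_zero)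
      (him p hp).ne' (hrigid p hp) (hΦ p hp)
  have hopen : ∀ U : Set (ℝ × ℝ), IsOpen U → U ⊆ Ω' → IsOpen (xiC lam '' U) := fun U hU hUΩ =>
    hξ.isOpen_image_of_isInvertible hΩ' one_ne_zero hξ' hU hUΩ
  exact ⟨hopen, hopen Ω' hΩ' subset_rfl, hξ.continuousOn, Function.invFunOn (xiC lam) Ω',
    hinj.contDiffOn_invFunOn hξ hΩ' one_ne_zero hξ', hinj.leftInvOn_invFunOn,
    (surjOn_image _ _).rightInvOn_invFunOn⟩
end

section
/- Let Ω ⊆ ℝ² be open, let λ : ℝ² → ℂ be differentiable at a point p ∈ Ω with (λ_x + λ·λ_y)(p) = 0, and let ξ(x,y) := y − λ(x,y)·x. Let G : ℂ → ℂ be real-differentiable at ξ(p) (differentiable as a map ℝ² ≅ ℂ → ℂ), and define ∂̄G(w) := ½·(DG(w)(1) + i·DG(w)(i)), where DG(w) is the real Fréchet derivative of G at w. Set f := G ∘ ξ. Then f is differentiable at p and f_x + λ·f_y = Φ(p) · (∂̄G)(ξ(p)). -/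
/-!
Since `DG(w) v = ∂G(w)·v + ∂̄G(w)·conj v`, the chain rule gives
`f_x + λ f_y = ∂G·(ξ_x + λ ξ_y) + ∂̄G·(conj ξ_x + λ conj ξ_y)`.
Differentiating `ξ = y − λx` gives `ξ_x + λ ξ_y = −x(λ_x + λ λ_y)`, which vanishes at a rigid
point, while `conj ξ_x + λ conj ξ_y` is exactly `Φ`.
-/

open Complex

/-- Wirtinger derivative `∂̄G(w) := ½(DG(w)(1) + i·DG(w)(i))` of a
real-differentiable map `G : ℂ → ℂ`. -/
noncomputable def dbar (G : ℂ → ℂ) (w : ℂ) : ℂ :=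
  (fderiv ℝ G w 1 + I * fderiv ℝ G w I) / 2

open scoped ComplexConjugate

theorem ContinuousLinearMap.apply_eq_wirtinger (L : ℂ →L[ℝ] ℂ) (v : ℂ) :
    L v = (L 1 - I * L I) / 2 * v + (L 1 + I * L I) / 2 * conj v := by
  have hv : v = v.re • (1 : ℂ) + v.im • I := by simp [Complex.real_smul, re_add_im]
  conv_lhs => rw [hv, map_add, map_smul, map_smul]
  conv_rhs => rw [← re_add_im v]
  simp only [Complex.real_smul, map_add, map_mul, conj_ofReal, conj_I]
  linear_combination (v.im : ℂ) * L I * I_mul_I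

theorem ContinuousLinearMap.apply_add_mul_apply_of_add_mul_eq_zero (L : ℂ →L[ℝ] ℂ)
    {u v c : ℂ} (h : u + c * v = 0) :
    L u + c * L v = (conj u + c * conj v) * ((L 1 + I * L I) / 2) := by
  rw [L.apply_eq_wirtinger u, L.apply_eq_wirtinger v]
  linear_combination (L 1 - I * L I) / 2 * h

theorem pdx_comp {G : ℂ → ℂ} {g : ℝ × ℝ → ℂ} {p : ℝ × ℝ}
    (hG : DifferentiableAt ℝ G (g p)) (hg : DifferentiableAt ℝ g p) :
    pdx (G ∘ g) p = fderiv ℝ G (g p) (pdx g p) := by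
  rw [pdx, pdx, fderiv_comp p hG hg, ContinuousLinearMap.comp_apply]

theorem pdy_comp {G : ℂ → ℂ} {g : ℝ × ℝ → ℂ} {p : ℝ × ℝ}
    (hG : DifferentiableAt ℝ G (g p)) (hg : DifferentiableAt ℝ g p) :
    pdy (G ∘ g) p = fderiv ℝ G (g p) (pdy g p) := by
  rw [pdy, pdy, fderiv_comp p hG hg, ContinuousLinearMap.comp_apply]

section CanonicalCoordinate

variable {lam : ℝ × ℝ → ℂ} {p : ℝ × ℝ}

theorem hasFDerivAt_xiC (hlam : DifferentiableAt ℝ lam p) :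
    HasFDerivAt (xiC lam)
      (ofRealCLM.comp (.snd ℝ ℝ ℝ)
        - (lam p • ofRealCLM.comp (.fst ℝ ℝ ℝ) + (p.1 : ℂ) • fderiv ℝ lam p)) p :=
  (ofRealCLM.comp (.snd ℝ ℝ ℝ)).hasFDerivAt.sub
    (hlam.hasFDerivAt.mul (ofRealCLM.comp (.fst ℝ ℝ ℝ)).hasFDerivAt)

theorem pdx_xiC (hlam : DifferentiableAt ℝ lam p) :
    pdx (xiC lam) p = -(lam p + p.1 * pdx lam p) := by
  simp [pdx, (hasFDerivAt_xiC hlam).fderiv]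

theorem pdy_xiC (hlam : DifferentiableAt ℝ lam p) :
    pdy (xiC lam) p = 1 - p.1 * pdy lam p := by
  simp [pdy, (hasFDerivAt_xiC hlam).fderiv]

theorem pdx_xiC_add_mul_pdy_xiC (hlam : DifferentiableAt ℝ lam p) :
    pdx (xiC lam) p + lam p * pdy (xiC lam) p = -p.1 * (pdx lam p + lam p * pdy lam p) := by
  rw [pdx_xiC hlam, pdy_xiC hlam]
  ring

theorem conj_pdx_xiC_add_mul_conj_pdy_xiC (hlam : DifferentiableAt ℝ lam p) :
    conj (pdx (xiC lam) p) + lam p * conj (pdy (xiC lam) p) = Phi lam p := by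
  rw [pdx_xiC hlam, pdy_xiC hlam, Phi]
  simp only [map_neg, map_add, map_sub, map_mul, map_one, conj_ofReal]
  ring

end CanonicalCoordinate

theorem stmt16_general
    (lam : ℝ × ℝ → ℂ) (p : ℝ × ℝ)
    (hlam : DifferentiableAt ℝ lam p)
    (hrigid : pdx lam p + lam p * pdy lam p = 0)
    (G : ℂ → ℂ) (hG : DifferentiableAt ℝ G (xiC lam p)) :
    DifferentiableAt ℝ (G ∘ xiC lam) p ∧
    pdx (G ∘ xiC lam) p + lam p * pdy (G ∘ xiC lam) p
      = Phi lam p * dbar G (xiC lam p) := by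
  have hξ := (hasFDerivAt_xiC hlam).differentiableAt
  have hcancel : pdx (xiC lam) p + lam p * pdy (xiC lam) p = 0 := by
    rw [pdx_xiC_add_mul_pdy_xiC hlam, hrigid, mul_zero]
  refine ⟨hG.comp p hξ, ?_⟩
  rw [pdx_comp hG hξ, pdy_comp hG hξ,
    (fderiv ℝ G _).apply_add_mul_apply_of_add_mul_eq_zero hcancel,
    conj_pdx_xiC_add_mul_conj_pdy_xiC hlam, dbar]

/-- Chain rule through the canonical coordinate at a rigid point:
`(G∘ξ)_x + λ·(G∘ξ)_y = Φ·(∂̄G)(ξ)`. -/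
theorem stmt16
    (Ω : Set (ℝ × ℝ)) (hΩ : IsOpen Ω)
    (lam : ℝ × ℝ → ℂ) (p : ℝ × ℝ) (hp : p ∈ Ω)
    (hlam : DifferentiableAt ℝ lam p)
    (hrigid : pdx lam p + lam p * pdy lam p = 0)
    (G : ℂ → ℂ) (hG : DifferentiableAt ℝ G (xiC lam p)) :
    DifferentiableAt ℝ (G ∘ xiC lam) p ∧
    pdx (G ∘ xiC lam) p + lam p * pdy (G ∘ xiC lam) p
      = Phi lam p * dbar G (xiC lam p) :=
  stmt16_general lam p hlam hrigid G hG
end
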